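/- arXiv:2603.00018 — 2 statements merged into one kernel-verified Lean document; each statement's English description precedes it below -/
import Mathlib

section
/- Let A ∈ ℍ^{n×n} and let ρ(A) ∈ ℝ^{4n×4n} be its real block embedding. Then rvec maps the right null space ker(A) = {x ∈ ℍⁿ : Ax = 0} bijectively onto the null space of ρ(A) in ℝ^{4n}, and the real dimension of ker(ρ(A)) equals 4 times the dimension of ker(A) as a right ℍ-vector space. Equivalently, if r is the column right rank of A and m = n − r, then rank(ρ(A)) = 4r and dim ker(ρ(A)) = 4m. -/
open Quaternion Matrix

/-- Real coefficient vector of a quaternion. -/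
noncomputable def rvec (q : ℍ[ℝ]) : Fin 4 → ℝ := ![q.re, q.imI, q.imJ, q.imK]

/-- The `4 × 4` real matrix of left multiplication by the quaternion `q`. -/
noncomputable def Lmat (q : ℍ[ℝ]) : Matrix (Fin 4) (Fin 4) ℝ :=
  !![q.re,  -q.imI, -q.imJ, -q.imK;
     q.imI,  q.re,  -q.imK,  q.imJ;
     q.imJ,  q.imK,  q.re,  -q.imI;
     q.imK, -q.imJ,  q.imI,  q.re]

/-- The real embedding `ρ : ℍ^{n×n} → ℝ^{4n×4n}` whose `(r,s)` block is `L(a_{rs})`. -/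
noncomputable def rho {n : ℕ} (A : Matrix (Fin n) (Fin n) ℍ[ℝ]) :
    Matrix (Fin n × Fin 4) (Fin n × Fin 4) ℝ :=
  fun p q => Lmat (A p.1 q.1) p.2 q.2

/-- Stacked real coefficient vector `rvec : ℍⁿ → ℝ^{4n}`. -/
noncomputable def rvecN {n : ℕ} (x : Fin n → ℍ[ℝ]) : Fin n × Fin 4 → ℝ :=
  fun p => rvec (x p.1) p.2

/-- `x ↦ A x` as a linear map of right `ℍ`-vector spaces (that is, modules over `ℍᵐᵒᵖ`). -/
noncomputable def mulVecRight {n : ℕ} (A : Matrix (Fin n) (Fin n) ℍ[ℝ]) :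
    (Fin n → ℍ[ℝ]) →ₗ[ℍ[ℝ]ᵐᵒᵖ] (Fin n → ℍ[ℝ]) where
  toFun x := A.mulVec x
  map_add' x y := Matrix.mulVec_add A x y
  map_smul' q x := by
    funext r
    simp only [RingHom.id_apply, Pi.smul_apply, MulOpposite.smul_eq_mul_unop,
      Matrix.mulVec, dotProduct, Finset.sum_mul, mul_assoc]

lemma Lmat_mulVec (q p : ℍ[ℝ]) : (Lmat q).mulVec (rvec p) = rvec (q * p) := by
  funext k
  fin_cases k <;>
    simp [Lmat, rvec, Matrix.mulVec, dotProduct, Fin.sum_univ_four,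
      Quaternion.re_mul, Quaternion.imI_mul, Quaternion.imJ_mul, Quaternion.imK_mul] <;> ring

lemma rvec_add (p q : ℍ[ℝ]) : rvec (p + q) = rvec p + rvec q := by
  funext k; fin_cases k <;> simp [rvec]

lemma rvec_smul (r : ℝ) (q : ℍ[ℝ]) : rvec (r • q) = r • rvec q := by
  funext k; fin_cases k <;> simp [rvec]

lemma rvec_sum {ι : Type*} (s : Finset ι) (f : ι → ℍ[ℝ]) :
    rvec (∑ i ∈ s, f i) = ∑ i ∈ s, rvec (f i) := by
  classical
  induction s using Finset.induction with
  | empty => funext k; fin_cases k <;> simp [rvec]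
  | insert _ _ h ih => simp [Finset.sum_insert h, rvec_add, ih]

lemma rho_mulVec {n : ℕ} (A : Matrix (Fin n) (Fin n) ℍ[ℝ]) (x : Fin n → ℍ[ℝ]) :
    (rho A).mulVec (rvecN x) = rvecN (A.mulVec x) := by
  funext p
  obtain ⟨i, k⟩ := p
  have : ((rho A).mulVec (rvecN x)) (i, k) =
      ∑ j : Fin n, ((Lmat (A i j)).mulVec (rvec (x j))) k := by
    simp [Matrix.mulVec, dotProduct, rho, rvecN, Fintype.sum_prod_type]
  rw [this]
  simp only [Lmat_mulVec]
  have : (A.mulVec x) i = ∑ j, A i j * x j := rfl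
  simp [rvecN, this, rvec_sum]

/-- Inverse of `rvecN`. -/
noncomputable def unrvecN {n : ℕ} (u : Fin n × Fin 4 → ℝ) : Fin n → ℍ[ℝ] :=
  fun i => ⟨u (i, 0), u (i, 1), u (i, 2), u (i, 3)⟩

lemma rvecN_leftInv {n : ℕ} (x : Fin n → ℍ[ℝ]) : unrvecN (rvecN x) = x := by
  funext i; rfl

lemma rvecN_rightInv {n : ℕ} (u : Fin n × Fin 4 → ℝ) : rvecN (unrvecN u) = u := by
  funext ⟨i, k⟩; fin_cases k <;> rfl

/-- `rvecN` as an `ℝ`-linear equivalence. -/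
noncomputable def rvecL (n : ℕ) : (Fin n → ℍ[ℝ]) ≃ₗ[ℝ] (Fin n × Fin 4 → ℝ) where
  toFun := rvecN
  invFun := unrvecN
  left_inv := rvecN_leftInv
  right_inv := rvecN_rightInv
  map_add' x y := by funext ⟨i, k⟩; exact congrFun (rvec_add (x i) (y i)) k
  map_smul' r x := by funext ⟨i, k⟩; exact congrFun (rvec_smul r (x i)) k

/-- `op` as an `ℍᵐᵒᵖ`-linear equivalence from `ℍ` (right module) to `ℍᵐᵒᵖ`. -/
noncomputable def opEquiv : ℍ[ℝ] ≃ₗ[ℍ[ℝ]ᵐᵒᵖ] ℍ[ℝ]ᵐᵒᵖ where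
  toFun := MulOpposite.op
  invFun := MulOpposite.unop
  left_inv _ := rfl
  right_inv _ := rfl
  map_add' _ _ := rfl
  map_smul' q x := by
    simp only [RingHom.id_apply, MulOpposite.smul_eq_mul_unop, smul_eq_mul]
    rfl

lemma finrank_pi_quat (n : ℕ) : Module.finrank ℍ[ℝ]ᵐᵒᵖ (Fin n → ℍ[ℝ]) = n := by
  rw [(LinearEquiv.piCongrRight fun _ : Fin n => opEquiv).finrank_eq]
  simp [Module.finrank_pi]

instance finDim_pi_quat (n : ℕ) : FiniteDimensional ℍ[ℝ]ᵐᵒᵖ (Fin n → ℍ[ℝ]) :=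
  Module.Finite.equiv (LinearEquiv.piCongrRight fun _ : Fin n => opEquiv).symm

lemma finrank_op_quat : Module.finrank ℝ ℍ[ℝ]ᵐᵒᵖ = 4 := by
  rw [← (MulOpposite.opLinearEquiv ℝ : ℍ[ℝ] ≃ₗ[ℝ] ℍ[ℝ]ᵐᵒᵖ).finrank_eq]
  exact Quaternion.finrank_eq_four (R := ℝ)

set_option synthInstance.maxHeartbeats 1000000 in
set_option maxHeartbeats 2000000 in
lemma finrank_restrict (n : ℕ) (S : Submodule ℍ[ℝ]ᵐᵒᵖ (Fin n → ℍ[ℝ])) :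
    Module.finrank ℝ (S.restrictScalars ℝ) = 4 * Module.finrank ℍ[ℝ]ᵐᵒᵖ S := by
  have h : Module.finrank ℝ ℍ[ℝ]ᵐᵒᵖ * Module.finrank ℍ[ℝ]ᵐᵒᵖ S = Module.finrank ℝ S :=
    Module.finrank_mul_finrank ℝ ℍ[ℝ]ᵐᵒᵖ S
  rw [finrank_op_quat] at h
  exact h ▸ rfl

lemma ker_rho_eq {n : ℕ} (A : Matrix (Fin n) (Fin n) ℍ[ℝ]) :
    LinearMap.ker (rho A).mulVecLin =
      Submodule.map (rvecL n : (Fin n → ℍ[ℝ]) →ₗ[ℝ] (Fin n × Fin 4 → ℝ))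
        ((LinearMap.ker (mulVecRight A)).restrictScalars ℝ) := by
  ext u
  simp only [LinearMap.mem_ker, Matrix.mulVecLin_apply, Submodule.mem_map,
    Submodule.restrictScalars_mem]
  constructor
  · intro hu
    refine ⟨unrvecN u, ?_, rvecN_rightInv u⟩
    have h1 : rvecN (A.mulVec (unrvecN u)) = 0 := by
      rw [← rho_mulVec, rvecN_rightInv, hu]
    have h2 := congrArg unrvecN h1
    rw [rvecN_leftInv] at h2
    show A.mulVec (unrvecN u) = 0
    rw [h2]
    funext i; rfl
  · rintro ⟨x, hx, rfl⟩
    show (rho A).mulVec (rvecN x) = 0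
    rw [rho_mulVec]
    have hx' : A.mulVec x = 0 := hx
    rw [hx']
    exact map_zero (rvecL n)

/-- `rvec` maps `ker(A) = {x : Ax = 0}` bijectively onto `ker(ρ(A))`, and
`dim_ℝ ker(ρ(A)) = 4 · dim_ℍ ker(A)` (dimension as a right `ℍ`-vector space).
Equivalently, if `r` is the column right rank of `A` (the right dimension of the range of
`x ↦ Ax`) and `m = n - r`, then `rank(ρ(A)) = 4r` and `dim ker(ρ(A)) = 4m`. -/
theorem rho_kernel_and_factor_four (n : ℕ) (A : Matrix (Fin n) (Fin n) ℍ[ℝ]) :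
    Set.BijOn rvecN {x : Fin n → ℍ[ℝ] | A.mulVec x = 0}
      {u : Fin n × Fin 4 → ℝ | (rho A).mulVec u = 0} ∧
    Module.finrank ℝ (LinearMap.ker (rho A).mulVecLin) =
      4 * Module.finrank ℍ[ℝ]ᵐᵒᵖ (LinearMap.ker (mulVecRight A)) ∧
    (∀ r m : ℕ,
      r = Module.finrank ℍ[ℝ]ᵐᵒᵖ (LinearMap.range (mulVecRight A)) → m = n - r →
      (rho A).rank = 4 * r ∧
      Module.finrank ℝ (LinearMap.ker (rho A).mulVecLin) = 4 * m) := by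
  have hker : Module.finrank ℝ (LinearMap.ker (rho A).mulVecLin) =
      4 * Module.finrank ℍ[ℝ]ᵐᵒᵖ (LinearMap.ker (mulVecRight A)) := by
    rw [ker_rho_eq A, LinearEquiv.finrank_map_eq]
    exact finrank_restrict n _
  refine ⟨?_, hker, ?_⟩
  · refine ⟨?_, ?_, ?_⟩
    · intro x hx
      show (rho A).mulVec (rvecN x) = 0
      rw [rho_mulVec, hx]
      exact map_zero (rvecL n)
    · intro x _ y _ h
      have := congrArg unrvecN h
      rwa [rvecN_leftInv, rvecN_leftInv] at this
    · intro u hu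
      refine ⟨unrvecN u, ?_, rvecN_rightInv u⟩
      have h1 : rvecN (A.mulVec (unrvecN u)) = 0 := by
        rw [← rho_mulVec, rvecN_rightInv]
        exact hu
      have := congrArg unrvecN h1
      rw [rvecN_leftInv] at this
      show A.mulVec (unrvecN u) = 0
      rw [this]; funext i; rfl
  · intro r m hr hm
    set d := Module.finrank ℍ[ℝ]ᵐᵒᵖ (LinearMap.ker (mulVecRight A)) with hd
    have hrn : r + d = n := by
      have h3 := LinearMap.finrank_range_add_finrank_ker (mulVecRight A)
      rw [finrank_pi_quat] at h3
      rw [hr, hd]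
      exact h3
    have hrank : (rho A).rank + Module.finrank ℝ (LinearMap.ker (rho A).mulVecLin)
        = 4 * n := by
      have := LinearMap.finrank_range_add_finrank_ker (rho A).mulVecLin
      rw [Matrix.rank]
      rw [this]
      simp [Module.finrank_pi]
      ring
    rw [hker] at hrank
    have hm' : m = d := by omega
    constructor
    · omega
    · rw [hker, hm']
end

section
/- If A ∈ ℍ^{n×n} is upper triangular with diagonal entries a₁₁,…,aₙₙ, then every left eigenvalue of A is a diagonal entry: σ_ℓ(A) ⊆ {a₁₁,…,aₙₙ}. -/
open Quaternion Matrix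

/-- The left spectrum `σ_ℓ(A) = {λ ∈ ℍ : ∃ x ≠ 0, A x = λ x}`. -/
def leftSpectrum {n : ℕ} (A : Matrix (Fin n) (Fin n) ℍ[ℝ]) : Set ℍ[ℝ] :=
  {l | ∃ x : Fin n → ℍ[ℝ], x ≠ 0 ∧ A.mulVec x = fun k => l * x k}

/-- Every left eigenvalue of an upper triangular quaternion matrix is one of its diagonal
entries: `σ_ℓ(A) ⊆ {a₁₁, …, aₙₙ}`. -/
theorem leftSpectrum_upper_triangular (n : ℕ) (A : Matrix (Fin n) (Fin n) ℍ[ℝ])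
    (htri : ∀ r s : Fin n, s < r → A r s = 0) :
    leftSpectrum A ⊆ Set.range (fun i => A i i) := by
  classical
  rintro l ⟨x, hx, hAx⟩
  set S : Finset (Fin n) := Finset.univ.filter (fun j => x j ≠ 0) with hSdef
  have hS : S.Nonempty := by
    rcases Function.ne_iff.mp hx with ⟨j, hj⟩
    exact ⟨j, Finset.mem_filter.mpr ⟨Finset.mem_univ _, hj⟩⟩
  set i := S.max' hS with hidef
  have hxi : x i ≠ 0 := (Finset.mem_filter.mp (S.max'_mem hS)).2
  have hzero : ∀ j, i < j → x j = 0 := by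
    intro j hj
    by_contra h
    exact absurd (S.le_max' j (Finset.mem_filter.mpr ⟨Finset.mem_univ _, h⟩))
      (not_le.mpr hj)
  have hsum : A.mulVec x i = A i i * x i := by
    have : A.mulVec x i = ∑ j, A i j * x j := rfl
    rw [this, Finset.sum_eq_single i]
    · intro j _ hji
      rcases lt_or_gt_of_ne hji with h | h
      · rw [htri i j h, zero_mul]
      · rw [hzero j h, mul_zero]
    · intro h; exact absurd (Finset.mem_univ i) h
  have heq : A i i * x i = l * x i := by
    have := congrFun hAx i
    rw [hsum] at this
    exact this
  have hsub : (A i i - l) * x i = 0 := by rw [sub_mul, heq, sub_self]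
  rcases mul_eq_zero.mp hsub with h | h
  · exact ⟨i, sub_eq_zero.mp h⟩
  · exact absurd h hxi
end
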